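/- For density matrices ρ and σ on a finite-dimensional Hilbert space with σ positive definite, the relative entropy satisfies D(ρ‖σ) ≥ −2 ln Tr[ρ^{1/2} σ^{1/2}]. -/

import Mathlib

open Matrix Kronecker
open scoped ComplexOrder

/-- The positive semidefinite square root, as `Matrix.PosSemidef.sqrt` was defined in older Mathlib. -/
noncomputable def Matrix.PosSemidef.sqrt {n : Type*} [Fintype n] [DecidableEq n] {𝕜 : Type*} [RCLike 𝕜]
    {A : Matrix n n 𝕜} (hA : A.PosSemidef) : Matrix n n 𝕜 :=
  hA.1.eigenvectorUnitary.1 * diagonal ((↑) ∘ (√·) ∘ hA.1.eigenvalues) *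
    (star hA.1.eigenvectorUnitary : Matrix n n 𝕜)

noncomputable def mexp {n : Type*} [Fintype n] [DecidableEq n] (A : Matrix n n ℂ) : Matrix n n ℂ :=
  if h : A.IsHermitian then h.cfc Real.exp else 0

noncomputable def mlog {n : Type*} [Fintype n] [DecidableEq n] (A : Matrix n n ℂ) : Matrix n n ℂ :=
  if h : A.IsHermitian then h.cfc Real.log else 0

open scoped Classical in
noncomputable def msqrt {n : Type*} [Fintype n] [DecidableEq n] (A : Matrix n n ℂ) : Matrix n n ℂ :=
  if h : A.PosSemidef then h.sqrt else 0

noncomputable def entropy {n : Type*} [Fintype n] [DecidableEq n] (ρ : Matrix n n ℂ) : ℝ :=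
  -((ρ * mlog ρ).trace.re)

noncomputable def relEnt {n : Type*} [Fintype n] [DecidableEq n] (ρ σ : Matrix n n ℂ) : ℝ :=
  ((ρ * (mlog ρ - mlog σ)).trace.re)

noncomputable def ptrace₂ {n m : Type*} [Fintype n] [Fintype m]
    (ρ : Matrix (n × m) (n × m) ℂ) : Matrix n n ℂ :=
  Matrix.of fun i j => ∑ k, ρ (i, k) (j, k)

noncomputable def ptrace₁ {n m : Type*} [Fintype n] [Fintype m]
    (ρ : Matrix (n × m) (n × m) ℂ) : Matrix m m ℂ :=
  Matrix.of fun i j => ∑ k, ρ (k, i) (k, j)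

noncomputable def traceNorm {n : Type*} [Fintype n] [DecidableEq n] (A : Matrix n n ℂ) : ℝ :=
  ((Matrix.posSemidef_conjTranspose_mul_self A).sqrt.trace).re


/-!
Diagonalise `ρ = ∑ pᵢ |uᵢ⟩⟨uᵢ|` and `σ = ∑ qⱼ |wⱼ⟩⟨wⱼ|` and put `cᵢⱼ = |⟨uᵢ, wⱼ⟩|²`, whose rows
sum to `1`. Then `D(ρ‖σ) = ∑ pᵢ cᵢⱼ log (pᵢ / qⱼ)` and `Tr ρ^{1/2} σ^{1/2} = ∑ pᵢ cᵢⱼ √(qⱼ / pᵢ)`,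
so the inequality is Jensen's inequality for the concave logarithm under the probability
distribution `pᵢ cᵢⱼ` on pairs of indices.
-/

open Real in
lemma neg_two_mul_log_sum_mul_sqrt_div_le {κ : Type*} [Fintype κ] {w a b : κ → ℝ}
    (hw : ∀ k, 0 ≤ w k) (hw1 : ∑ k, w k = 1) (ha : ∀ k, 0 < a k) (hb : ∀ k, 0 < b k) :
    -2 * log (∑ k, w k * √(b k / a k)) ≤ ∑ k, w k * log (a k / b k) := by
  have jensen := strictConcaveOn_log_Ioi.concaveOn.le_map_sum (t := Finset.univ)
    (p := fun k ↦ √(b k / a k)) (fun k _ ↦ hw k) hw1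
    (fun k _ ↦ sqrt_pos.2 (div_pos (hb k) (ha k)))
  have log_sqrt_div : ∀ k, log √(b k / a k) = -(log (a k / b k) / 2) := fun k ↦ by
    rw [log_sqrt (div_pos (hb k) (ha k)).le, ← neg_div, ← log_inv, inv_div]
  simp only [smul_eq_mul, log_sqrt_div, mul_neg, Finset.sum_neg_distrib, ← mul_div_assoc,
    ← Finset.sum_div] at jensen
  linarith

open Real in
lemma neg_two_mul_log_sum_sqrt_mul_le {d : Type*} [Fintype d] {p q : d → ℝ} {c : d → d → ℝ}
    (hp : ∀ i, 0 < p i) (hq : ∀ j, 0 < q j) (hc : ∀ i j, 0 ≤ c i j)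
    (hc1 : ∀ i, ∑ j, c i j = 1) (hp1 : ∑ i, p i = 1) :
    -2 * log (∑ i, ∑ j, √(p i) * √(q j) * c i j) ≤
      ∑ i, p i * log (p i) - ∑ i, ∑ j, p i * log (q j) * c i j := by
  have key := neg_two_mul_log_sum_mul_sqrt_div_le (κ := d × d) (w := fun k ↦ p k.1 * c k.1 k.2)
    (a := fun k ↦ p k.1) (b := fun k ↦ q k.2) (fun k ↦ mul_nonneg (hp _).le (hc _ _))
    (by simp [Fintype.sum_prod_type, ← Finset.mul_sum, hc1, hp1]) (fun _ ↦ hp _) (fun _ ↦ hq _)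
  simp only [Fintype.sum_prod_type] at key
  convert key using 3
  · refine Finset.sum_congr rfl fun i _ ↦ Finset.sum_congr rfl fun j _ ↦ ?_
    rw [sqrt_div' _ (hp i).le, mul_div_assoc', eq_div_iff (sqrt_pos.2 (hp i)).ne']
    linear_combination (√(q j) * c i j) * mul_self_sqrt (hp i).le
  · simp only [log_div (hp _).ne' (hq _).ne', ← Finset.sum_sub_distrib]
    refine Finset.sum_congr rfl fun i _ ↦ ?_
    simp only [mul_sub, Finset.sum_sub_distrib, ← Finset.sum_mul, ← Finset.mul_sum, hc1, mul_one]
    congr 1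
    exact Finset.sum_congr rfl fun j _ ↦ by ring

namespace Matrix.IsHermitian

variable {d : Type*} [Fintype d] [DecidableEq d] {A B : Matrix d d ℂ}

noncomputable def eigenOverlap (hA : A.IsHermitian) (hB : B.IsHermitian) (i j : d) : ℝ :=
  Complex.normSq (((star hA.eigenvectorUnitary * hB.eigenvectorUnitary : unitaryGroup d ℂ) :
    Matrix d d ℂ) i j)

lemma sum_eigenOverlap (hA : A.IsHermitian) (hB : B.IsHermitian) (i : d) :
    ∑ j, hA.eigenOverlap hB i j = 1 := by
  set V := star hA.eigenvectorUnitary * hB.eigenvectorUnitary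
  have := congrFun₂ (Unitary.coe_mul_star_self V) i i
  simp only [mul_apply, one_apply_eq, Unitary.coe_star, star_apply, Complex.star_def,
    Complex.mul_conj] at this
  exact_mod_cast this

lemma eigenOverlap_self (hA : A.IsHermitian) (i j : d) :
    hA.eigenOverlap hA i j = if i = j then 1 else 0 := by
  rw [eigenOverlap, Unitary.star_mul_self, OneMemClass.coe_one, one_apply]
  split_ifs <;> simp

lemma cfc_id (hA : A.IsHermitian) : hA.cfc id = A :=
  hA.spectral_theorem.symm

lemma trace_cfc_mul_cfc (hA : A.IsHermitian) (hB : B.IsHermitian) (f g : ℝ → ℝ) :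
    (hA.cfc f * hB.cfc g).trace =
      ↑(∑ i, ∑ j, f (hA.eigenvalues i) * g (hB.eigenvalues j) * hA.eigenOverlap hB i j) := by
  set V := star hA.eigenvectorUnitary * hB.eigenvectorUnitary
  have hW : hB.eigenvectorUnitary = hA.eigenvectorUnitary * V := by
    simp [V, Unitary.star_eq_inv]
  have trace_conj (M : Matrix d d ℂ) :
      (Unitary.conjStarAlgAut ℂ _ hA.eigenvectorUnitary M).trace = M.trace := by
    rw [Unitary.conjStarAlgAut_apply, trace_mul_cycle, Unitary.coe_star_mul_self, Matrix.one_mul]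
  rw [IsHermitian.cfc, IsHermitian.cfc, hW, Unitary.conjStarAlgAut_mul_apply, ← map_mul, trace_conj]
  simp only [Unitary.conjStarAlgAut_apply, trace, diag_apply, diagonal_mul,
    mul_apply (M := (V : Matrix d d ℂ) * diagonal _), mul_diagonal, Finset.mul_sum]
  push_cast
  refine Finset.sum_congr rfl fun i _ ↦ Finset.sum_congr rfl fun j _ ↦ ?_
  change _ = _ * ((Complex.normSq ((V : Matrix d d ℂ) i j) : ℝ) : ℂ)
  rw [← Complex.mul_conj, star_apply, Complex.star_def]
  simp only [Function.comp_apply, RCLike.ofReal_eq_complex_ofReal]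
  ring

end Matrix.IsHermitian

section

variable {d : Type*} [Fintype d] [DecidableEq d] {ρ σ A : Matrix d d ℂ}

lemma mlog_eq_cfc (hA : A.IsHermitian) : mlog A = hA.cfc Real.log := by
  rw [mlog, dif_pos hA]

lemma msqrt_eq_cfc (hA : A.PosSemidef) : msqrt A = hA.1.cfc Real.sqrt := by
  rw [msqrt, dif_pos hA]
  rfl

open Real in
lemma relEnt_eq_sum_eigenvalues (hρ : ρ.IsHermitian) (hσ : σ.IsHermitian) :
    relEnt ρ σ = ∑ i, hρ.eigenvalues i * log (hρ.eigenvalues i) -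
      ∑ i, ∑ j, hρ.eigenvalues i * log (hσ.eigenvalues j) * hρ.eigenOverlap hσ i j := by
  rw [relEnt, mlog_eq_cfc hρ, mlog_eq_cfc hσ]
  nth_rw 1 [← hρ.cfc_id]
  rw [Matrix.mul_sub, trace_sub, hρ.trace_cfc_mul_cfc, hρ.trace_cfc_mul_cfc]
  simp [IsHermitian.eigenOverlap_self]

lemma re_trace_msqrt_mul_msqrt (hρ : ρ.PosSemidef) (hσ : σ.PosSemidef) :
    (msqrt ρ * msqrt σ).trace.re =
      ∑ i, ∑ j, √(hρ.1.eigenvalues i) * √(hσ.1.eigenvalues j) * hρ.1.eigenOverlap hσ.1 i j := by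
  rw [msqrt_eq_cfc hρ, msqrt_eq_cfc hσ, IsHermitian.trace_cfc_mul_cfc, Complex.ofReal_re]

end

theorem stmt3_general {d : Type*} [Fintype d] [DecidableEq d] (ρ σ : Matrix d d ℂ)
    (hρ : ρ.PosDef) (hσ : σ.PosDef) (htρ : ρ.trace = 1) :
    relEnt ρ σ ≥ -2 * Real.log ((msqrt ρ * msqrt σ).trace.re) := by
  have sum_eigenvalues : ∑ i, hρ.1.eigenvalues i = 1 := by
    have := hρ.1.trace_eq_sum_eigenvalues
    rw [htρ, ← RCLike.ofReal_sum, ← RCLike.ofReal_one] at this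
    exact RCLike.ofReal_injective this.symm
  rw [relEnt_eq_sum_eigenvalues hρ.1 hσ.1, re_trace_msqrt_mul_msqrt hρ.posSemidef hσ.posSemidef]
  exact neg_two_mul_log_sum_sqrt_mul_le hρ.eigenvalues_pos hσ.eigenvalues_pos
    (fun _ _ ↦ Complex.normSq_nonneg _) (hρ.1.sum_eigenOverlap hσ.1) sum_eigenvalues

theorem stmt3 {d : Type*} [Fintype d] [DecidableEq d] (ρ σ : Matrix d d ℂ)
    (hρ : ρ.PosDef) (hσ : σ.PosDef) (htρ : ρ.trace = 1) (htσ : σ.trace = 1) :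
    relEnt ρ σ ≥ -2 * Real.log ((msqrt ρ * msqrt σ).trace.re) :=
  stmt3_general ρ σ hρ hσ htρ
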